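/- Descent property of the proximal gradient step: if f is differentiable with L-Lipschitz gradient, g is proper closed, γ ∈ (0, 1/L], and x⁺ = prox_{γg}(x − γ∇f(x)), then f(x⁺) + g(x⁺) ≤ f(x) + g(x) − (1/(2γ) − L/2)‖x⁺ − x‖². -/

import Mathlib

noncomputable section

/-- `z` is a point of the proximal mapping `prox_{γ g}(x)`. -/
def IsProx {E : Type*} [NormedAddCommGroup E] [InnerProductSpace ℝ E]
    (g : E → EReal) (γ : ℝ) (x z : E) : Prop :=
  ∀ y : E, g z + ((1 / (2 * γ) * ‖z - x‖ ^ 2 : ℝ) : EReal)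
      ≤ g y + ((1 / (2 * γ) * ‖y - x‖ ^ 2 : ℝ) : EReal)

/-- Descent lemma: quadratic upper bound for a function with Lipschitz gradient. -/
theorem descent_lemma' {n : ℕ} (f : EuclideanSpace ℝ (Fin n) → ℝ)
    (hf : Differentiable ℝ f) (L : ℝ) (hL : 0 ≤ L)
    (hlip : ∀ x y, ‖gradient f x - gradient f y‖ ≤ L * ‖x - y‖)
    (x y : EuclideanSpace ℝ (Fin n)) :
    f y ≤ f x + inner ℝ (gradient f x) (y - x) + L / 2 * ‖y - x‖ ^ 2 := by
  set v := y - x with hv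
  have hcont : Continuous (gradient f) := by
    refine (LipschitzWith.of_dist_le_mul (K := L.toNNReal) ?_).continuous
    intro a b
    rw [dist_eq_norm, dist_eq_norm, Real.coe_toNNReal L hL]
    exact hlip a b
  have hderiv : ∀ t : ℝ, HasDerivAt (fun s => f (x + s • v))
      ((inner ℝ (gradient f (x + t • v)) v : ℝ)) t := by
    intro t
    have h1 : HasDerivAt (fun s : ℝ => x + s • v) v t := by
      simpa using ((hasDerivAt_id t).smul_const v).const_add x
    have h2 := (hf (x + t • v)).hasGradientAt.hasFDerivAt
    have := h2.comp_hasDerivAt t h1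
    have h3 : HasDerivAt (fun s => f (x + s • v))
        ((InnerProductSpace.toDual ℝ (EuclideanSpace ℝ (Fin n)) (gradient f (x + t • v))) v) t := this
    simpa using h3
  have hcψ : Continuous (fun t : ℝ => (inner ℝ (gradient f (x + t • v)) v : ℝ)) := by
    exact (hcont.comp (by continuity)).inner continuous_const
  have key : f (x + (1:ℝ) • v) - f (x + (0:ℝ) • v)
      = ∫ t in (0:ℝ)..1, (inner ℝ (gradient f (x + t • v)) v : ℝ) :=
    (intervalIntegral.integral_eq_sub_of_hasDerivAt (fun t _ => hderiv t)
      (hcψ.intervalIntegrable 0 1)).symm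
  have hbound : ∫ t in (0:ℝ)..1, (inner ℝ (gradient f (x + t • v)) v : ℝ)
      ≤ ∫ t in (0:ℝ)..1, ((inner ℝ (gradient f x) v : ℝ) + L * ‖v‖ ^ 2 * t) := by
    apply intervalIntegral.integral_mono_on (by norm_num) (hcψ.intervalIntegrable 0 1)
      ((by fun_prop : Continuous fun t : ℝ => (inner ℝ (gradient f x) v : ℝ) + L * ‖v‖ ^ 2 * t).intervalIntegrable 0 1)
    intro t ht
    have h1 : (inner ℝ (gradient f (x + t • v)) v : ℝ) - inner ℝ (gradient f x) v
        = inner ℝ (gradient f (x + t • v) - gradient f x) v := by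
      rw [inner_sub_left]
    have h2 : (inner ℝ (gradient f (x + t • v) - gradient f x) v : ℝ)
        ≤ ‖gradient f (x + t • v) - gradient f x‖ * ‖v‖ := real_inner_le_norm _ _
    have h3 : ‖gradient f (x + t • v) - gradient f x‖ ≤ L * (t * ‖v‖) := by
      have := hlip (x + t • v) x
      simpa [norm_smul, abs_of_nonneg ht.1] using this
    nlinarith [norm_nonneg v, mul_le_mul_of_nonneg_right h3 (norm_nonneg v)]
  have hval : ∫ t in (0:ℝ)..1, ((inner ℝ (gradient f x) v : ℝ) + L * ‖v‖ ^ 2 * t)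
      = (inner ℝ (gradient f x) v : ℝ) + L / 2 * ‖v‖ ^ 2 := by
    rw [intervalIntegral.integral_add (intervalIntegrable_const)
      ((by fun_prop : Continuous fun t : ℝ => L * ‖v‖ ^ 2 * t).intervalIntegrable 0 1),
      intervalIntegral.integral_const_mul, integral_id]
    simp
    ring
  have : f y - f x ≤ (inner ℝ (gradient f x) v : ℝ) + L / 2 * ‖v‖ ^ 2 := by
    have hy : x + (1:ℝ) • v = y := by simp [hv]
    have hx : x + (0:ℝ) • v = x := by simp
    rw [hy, hx] at key
    rw [key]
    calc _ ≤ _ := hbound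
    _ = _ := hval
  linarith

/-- Descent property of the proximal gradient step: if `f` is differentiable
with `L`-Lipschitz gradient, `g` is proper closed, `γ ∈ (0, 1/L]`, and
`x⁺ = prox_{γ g}(x - γ ∇f(x))`, then
`f(x⁺) + g(x⁺) ≤ f(x) + g(x) - (1/(2γ) - L/2) ‖x⁺ - x‖²`. -/
theorem prox_gradient_descent_property {n : ℕ}
    (f : EuclideanSpace ℝ (Fin n) → ℝ) (hf : Differentiable ℝ f)
    (L : ℝ) (hL : 0 < L)
    (hlip : ∀ x y, ‖gradient f x - gradient f y‖ ≤ L * ‖x - y‖)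
    (g : EuclideanSpace ℝ (Fin n) → EReal)
    (htop : ∃ x, g x ≠ ⊤) (hbot : ∀ x, g x ≠ ⊥) (hclosed : LowerSemicontinuous g)
    (γ : ℝ) (hγ : 0 < γ) (hγL : γ ≤ 1 / L)
    (x xplus : EuclideanSpace ℝ (Fin n))
    (hstep : IsProx g γ (x - γ • gradient f x) xplus) :
    (f xplus : EReal) + g xplus ≤
      ((f x : EReal) + g x) -
        (((1 / (2 * γ) - L / 2) * ‖xplus - x‖ ^ 2 : ℝ) : EReal) := by
  by_cases hgx : g x = ⊤
  · rw [hgx]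
    rw [EReal.add_top_iff_ne_bot.mpr (by exact_mod_cast EReal.coe_ne_bot (f x))]
    rw [EReal.top_sub_coe]
    exact le_top
  · set a : ℝ := (g x).toReal with ha
    have hga : g x = (a : EReal) := (EReal.coe_toReal hgx (hbot x)).symm
    have hprox := hstep x
    have hgp : g xplus ≠ ⊤ := by
      intro h
      rw [h, hga] at hprox
      rw [EReal.top_add_of_ne_bot (by exact_mod_cast EReal.coe_ne_bot _)] at hprox
      exact (EReal.coe_add a _ ▸ (EReal.coe_ne_top _ : ((a + _ : ℝ) : EReal) ≠ ⊤))
        (top_le_iff.mp hprox)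
    set b : ℝ := (g xplus).toReal with hb
    have hgb : g xplus = (b : EReal) := (EReal.coe_toReal hgp (hbot xplus)).symm
    rw [hga, hgb] at hprox ⊢
    rw [← EReal.coe_add, ← EReal.coe_add, EReal.coe_le_coe_iff] at hprox
    rw [← EReal.coe_add, ← EReal.coe_add, ← EReal.coe_sub, EReal.coe_le_coe_iff]
    have e1 : xplus - (x - γ • gradient f x) = (xplus - x) + γ • gradient f x := by
      abel
    have e2 : x - (x - γ • gradient f x) = γ • gradient f x := by abel
    rw [e1, e2] at hprox
    rw [norm_add_sq_real] at hprox
    have e3 : (inner ℝ (xplus - x) (γ • gradient f x) : ℝ)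
        = γ * inner ℝ (gradient f x) (xplus - x) := by
      rw [real_inner_smul_right, real_inner_comm]
    rw [e3] at hprox
    have hdesc := descent_lemma' f hf L hL.le hlip x xplus
    have hγ' : (0:ℝ) < 2 * γ := by linarith
    have expand : 1 / (2 * γ) * (‖xplus - x‖ ^ 2 + 2 * (γ * inner ℝ (gradient f x) (xplus - x)) + ‖γ • gradient f x‖ ^ 2)
        = 1 / (2 * γ) * ‖xplus - x‖ ^ 2 + inner ℝ (gradient f x) (xplus - x) + 1 / (2 * γ) * ‖γ • gradient f x‖ ^ 2 := by
      field_simp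
    rw [expand] at hprox
    nlinarith [hprox, hdesc]
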